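/- arXiv:2602.10838 — 4 statements merged into one kernel-verified Lean document; each statement's English description precedes it below -/
import Mathlib

section
/- Let $\mu$ and $\pi$ be probability measures on a measurable space $A$ such that $\pi \ll \mu$ and $\mu \ll \pi$ with bounded log-density $f = \log\frac{d\pi}{d\mu}$. Then $\operatorname{KL}(\pi\,|\,\mu) \le 2\,\big\| f - \int_A f\, d\mu \big\|_\infty$, where $\operatorname{KL}(\pi|\mu) = \int_A \log\frac{d\pi}{d\mu}\, d\pi$. -/
/-! Since `exp f` is the density of the `μ`-absolutely continuous part of `π`, it has `μ`-integral at most `1`,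
so Jensen's inequality for `exp` gives `∫ f dμ ≤ 0`. As `f` exceeds its `μ`-mean by at most `C`
everywhere, `∫ f dπ ≤ ∫ f dμ + C ≤ C`, and `C ≥ 0`. -/

open MeasureTheory

section

variable {A : Type*} [MeasurableSpace A]

lemma integrable_of_abs_sub_le {μ : Measure A} [IsFiniteMeasure μ] {f : A → ℝ}
    (hf : Measurable f) {c C : ℝ} (h : ∀ a, |f a - c| ≤ C) : Integrable f μ :=
  .of_bound hf.aestronglyMeasurable (C + |c|) <| .of_forall fun a => by
    rw [Real.norm_eq_abs]
    linarith [h a, abs_sub_abs_le_abs_sub (f a) c]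

lemma integral_exp_le_of_toReal_rnDeriv_eq {μ π : Measure A} [IsFiniteMeasure π]
    {f : A → ℝ} (hdens : ∀ᵐ a ∂μ, (π.rnDeriv μ a).toReal = Real.exp (f a)) :
    ∫ a, Real.exp (f a) ∂μ ≤ π.real Set.univ := by
  rw [← integral_congr_ae hdens, ← setIntegral_univ]
  exact Measure.setIntegral_toReal_rnDeriv_le (measure_ne_top π _)

lemma integral_nonpos_of_integral_exp_le_one {μ : Measure A} [IsProbabilityMeasure μ]
    {f : A → ℝ} (hf : Integrable f μ) (hexp : Integrable (fun a => Real.exp (f a)) μ)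
    (h : ∫ a, Real.exp (f a) ∂μ ≤ 1) : ∫ a, f a ∂μ ≤ 0 := by
  have jensen : Real.exp (∫ a, f a ∂μ) ≤ ∫ a, Real.exp (f a) ∂μ :=
    convexOn_exp.map_integral_le Real.continuous_exp.continuousOn isClosed_univ
      (.of_forall fun _ => trivial) hf hexp
  exact Real.exp_le_one_iff.mp (jensen.trans h)

lemma integral_le_integral_add_of_sub_integral_le {μ π : Measure A} [IsProbabilityMeasure π]
    {f : A → ℝ} (hf : Integrable f π) {C : ℝ} (h : ∀ a, f a - ∫ x, f x ∂μ ≤ C) :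
    ∫ a, f a ∂π ≤ ∫ a, f a ∂μ + C := by
  calc ∫ a, f a ∂π ≤ ∫ _, (∫ x, f x ∂μ + C) ∂π :=
        integral_mono hf (integrable_const _) fun a => by linarith [h a]
    _ = ∫ a, f a ∂μ + C := by simp

end

theorem stmt_1_general {A : Type*} [MeasurableSpace A]
    (μ π : Measure A) [IsProbabilityMeasure μ] [IsProbabilityMeasure π]
    (f : A → ℝ) (hf : Measurable f)
    (hdens : ∀ᵐ a ∂μ, (π.rnDeriv μ a).toReal = Real.exp (f a))
    (C : ℝ) (hC : ∀ a, |f a - ∫ x, f x ∂μ| ≤ C) :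
    ∫ a, f a ∂π ≤ 2 * C := by
  have hmean : ∫ a, f a ∂μ ≤ 0 :=
    integral_nonpos_of_integral_exp_le_one (integrable_of_abs_sub_le hf hC)
      (Measure.integrable_toReal_rnDeriv.congr hdens)
      (by simpa using integral_exp_le_of_toReal_rnDeriv_eq hdens)
  have hπ : ∫ a, f a ∂π ≤ ∫ a, f a ∂μ + C :=
    integral_le_integral_add_of_sub_integral_le (integrable_of_abs_sub_le hf hC)
      fun a => (abs_le.mp (hC a)).2
  have hC0 : 0 ≤ C := (abs_nonneg _).trans (hC (Measure.nonempty_of_neZero μ).some)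
  linarith

theorem stmt_1 {A : Type*} [MeasurableSpace A]
    (μ π : Measure A) [IsProbabilityMeasure μ] [IsProbabilityMeasure π]
    (hπμ : π ≪ μ) (hμπ : μ ≪ π)
    (f : A → ℝ) (hf : Measurable f) (M : ℝ) (hfb : ∀ a, |f a| ≤ M)
    (hdens : ∀ᵐ a ∂μ, (π.rnDeriv μ a).toReal = Real.exp (f a))
    (C : ℝ) (hC : ∀ a, |f a - ∫ x, f x ∂μ| ≤ C) :
    ∫ a, f a ∂π ≤ 2 * C :=
  stmt_1_general μ π f hf hdens C hC
end

section
/- Let $\mu, \pi, \pi'$ be probability measures on a measurable space $A$, all mutually absolutely continuous with bounded log-densities. Then $\int_A \log\frac{d\pi}{d\mu}\, d\pi - \int_A \log\frac{d\pi'}{d\mu}\, d\pi' = \operatorname{KL}(\pi|\pi') + \int_A \log\frac{d\pi'}{d\mu}\, d(\pi - \pi')$, and consequently $\big| \operatorname{KL}(\pi|\mu) - \operatorname{KL}(\pi'|\mu) \big| \le \operatorname{KL}(\pi|\pi') + \big\| \log\tfrac{d\pi'}{d\mu} - \int_A \log\tfrac{d\pi'}{d\mu}\, d\mu \big\|_\infty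 \cdot \|\pi - \pi'\|_{TV}$. -/
open MeasureTheory

private lemma integrable_of_abs_bound {A : Type*} [MeasurableSpace A] (ν : Measure A)
    [IsFiniteMeasure ν] {g : A → ℝ} (hg : Measurable g) {M : ℝ} (h : ∀ a, |g a| ≤ M) :
    Integrable g ν :=
  (integrable_const M).mono' hg.aestronglyMeasurable
    (Filter.Eventually.of_forall fun a => by simpa [Real.norm_eq_abs] using h a)

/-- Difference of integrals against two measures whose signed difference has the given
Jordan decomposition is controlled by total variation. -/
private lemma integral_diff_le_tv {A : Type*} [MeasurableSpace A]
    (π π' : Measure A) [IsProbabilityMeasure π] [IsProbabilityMeasure π']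
    (g : A → ℝ) (hg : Measurable g) (C : ℝ) (hgb : ∀ a, |g a| ≤ C) :
    |∫ a, g a ∂π - ∫ a, g a ∂π'|
      ≤ C * ((π.toSignedMeasure - π'.toSignedMeasure).totalVariation Set.univ).toReal := by
  set s := π.toSignedMeasure - π'.toSignedMeasure with hs
  set p := s.toJordanDecomposition.posPart with hp
  set n := s.toJordanDecomposition.negPart with hn
  have hkey : π + n = π' + p := by
    ext E hE
    have h1 : s E = (π E).toReal - (π' E).toReal := by
      rw [hs, VectorMeasure.sub_apply, Measure.toSignedMeasure_apply_measurable hE,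
        Measure.toSignedMeasure_apply_measurable hE]; rfl
    have h2 : s E = (p E).toReal - (n E).toReal := by
      conv_lhs => rw [← s.toSignedMeasure_toJordanDecomposition]
      rw [JordanDecomposition.toSignedMeasure, VectorMeasure.sub_apply,
        Measure.toSignedMeasure_apply_measurable hE,
        Measure.toSignedMeasure_apply_measurable hE]; rfl
    have hπE : π E ≠ ⊤ := measure_ne_top _ _
    have hπ'E : π' E ≠ ⊤ := measure_ne_top _ _
    have hpE : p E ≠ ⊤ := measure_ne_top _ _
    have hnE : n E ≠ ⊤ := measure_ne_top _ _
    simp only [Measure.add_apply]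
    have : (π E).toReal + (n E).toReal = (π' E).toReal + (p E).toReal := by
      have := h1.symm.trans h2
      linarith
    exact (ENNReal.toReal_eq_toReal_iff' (by finiteness) (by finiteness)).mp
      (by rw [ENNReal.toReal_add hπE hnE, ENNReal.toReal_add hπ'E hpE]; exact this)
  have hip : Integrable g (π : Measure A) := integrable_of_abs_bound _ hg hgb
  have hip' : Integrable g (π' : Measure A) := integrable_of_abs_bound _ hg hgb
  have hin : Integrable g n := integrable_of_abs_bound _ hg hgb
  have hipp : Integrable g p := integrable_of_abs_bound _ hg hgb
  have hint : ∫ a, g a ∂π + ∫ a, g a ∂n = ∫ a, g a ∂π' + ∫ a, g a ∂p := by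
    rw [← integral_add_measure hip hin, ← integral_add_measure hip' hipp, hkey]
  have hdiff : ∫ a, g a ∂π - ∫ a, g a ∂π' = ∫ a, g a ∂p - ∫ a, g a ∂n := by linarith
  rw [hdiff]
  have hbp : |∫ a, g a ∂p| ≤ C * (p Set.univ).toReal := by
    simpa [Real.norm_eq_abs, Measure.real] using
      norm_integral_le_of_norm_le_const (μ := p) (f := g) (C := C)
        (Filter.Eventually.of_forall fun a => by simpa [Real.norm_eq_abs] using hgb a)
  have hbn : |∫ a, g a ∂n| ≤ C * (n Set.univ).toReal := by
    simpa [Real.norm_eq_abs, Measure.real] using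
      norm_integral_le_of_norm_le_const (μ := n) (f := g) (C := C)
        (Filter.Eventually.of_forall fun a => by simpa [Real.norm_eq_abs] using hgb a)
  have htv : (s.totalVariation Set.univ).toReal
      = (p Set.univ).toReal + (n Set.univ).toReal := by
    rw [SignedMeasure.totalVariation, Measure.add_apply,
      ENNReal.toReal_add (measure_ne_top _ _) (measure_ne_top _ _)]
  rw [htv]
  have := abs_sub (∫ a, g a ∂p) (∫ a, g a ∂n)
  calc |∫ a, g a ∂p - ∫ a, g a ∂n| ≤ |∫ a, g a ∂p| + |∫ a, g a ∂n| := abs_sub _ _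
    _ ≤ C * (p Set.univ).toReal + C * (n Set.univ).toReal := add_le_add hbp hbn
    _ = C * ((p Set.univ).toReal + (n Set.univ).toReal) := by ring

/-- `f = log dπ/dμ`, `f' = log dπ'/dμ`, so that `log dπ/dπ' = f - f'`;
`KL(π|μ) = ∫ f dπ`, `KL(π'|μ) = ∫ f' dπ'`, `KL(π|π') = ∫ (f - f') dπ`. -/
theorem stmt_16 {A : Type*} [MeasurableSpace A]
    (μ π π' : Measure A) [IsProbabilityMeasure μ]
    [IsProbabilityMeasure π] [IsProbabilityMeasure π']
    (f f' : A → ℝ) (hf : Measurable f) (hf' : Measurable f')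
    (M : ℝ) (hfb : ∀ a, |f a| ≤ M) (hf'b : ∀ a, |f' a| ≤ M)
    (hπ : π = μ.withDensity (fun a => ENNReal.ofReal (Real.exp (f a))))
    (hπ' : π' = μ.withDensity (fun a => ENNReal.ofReal (Real.exp (f' a)))) :
    (∫ a, f a ∂π - ∫ a, f' a ∂π'
        = ∫ a, (f a - f' a) ∂π + (∫ a, f' a ∂π - ∫ a, f' a ∂π'))
    ∧ ∀ C : ℝ, (∀ a, |f' a - ∫ x, f' x ∂μ| ≤ C) →
        |∫ a, f a ∂π - ∫ a, f' a ∂π'|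
          ≤ ∫ a, (f a - f' a) ∂π
            + C * ((π.toSignedMeasure - π'.toSignedMeasure).totalVariation Set.univ).toReal := by
  have hif : Integrable f π := integrable_of_abs_bound _ hf hfb
  have hif' : Integrable f' π := integrable_of_abs_bound _ hf' hf'b
  have hsub : ∫ a, (f a - f' a) ∂π = ∫ a, f a ∂π - ∫ a, f' a ∂π :=
    integral_sub hif hif'
  -- KL(π|π') ≥ 0
  have hexp1 : ∫ a, Real.exp (f' a - f a) ∂π = 1 := by
    have hmeas : Measurable fun a => ENNReal.ofReal (Real.exp (f' a - f a)) :=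
      ((hf'.sub hf).exp).ennreal_ofReal
    have hmeasf : Measurable fun a => ENNReal.ofReal (Real.exp (f a)) :=
      hf.exp.ennreal_ofReal
    have hlint : ∫⁻ a, ENNReal.ofReal (Real.exp (f' a - f a)) ∂π
        = ∫⁻ a, ENNReal.ofReal (Real.exp (f' a)) ∂μ := by
      rw [hπ, lintegral_withDensity_eq_lintegral_mul μ hmeasf hmeas]
      congr 1
      ext a
      simp only [Pi.mul_apply]
      rw [← ENNReal.ofReal_mul (Real.exp_nonneg _), ← Real.exp_add]
      ring_nf
    have hμ1 : ∫⁻ a, ENNReal.ofReal (Real.exp (f' a)) ∂μ = 1 := by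
      have : π' Set.univ = 1 := measure_univ
      rw [hπ'] at this
      rwa [withDensity_apply _ MeasurableSet.univ, setLIntegral_univ] at this
    rw [integral_eq_lintegral_of_nonneg_ae (f := fun a => Real.exp (f' a - f a))
        (Filter.Eventually.of_forall fun a => Real.exp_nonneg _)
        ((hf'.sub hf).exp).aestronglyMeasurable,
      hlint, hμ1, ENNReal.toReal_one]
  have hKL : 0 ≤ ∫ a, (f a - f' a) ∂π := by
    have hiexp : Integrable (fun a => Real.exp (f' a - f a)) π := by
      refine integrable_of_abs_bound _ ((hf'.sub hf).exp) (M := Real.exp (2 * M)) ?_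
      intro a
      rw [abs_of_nonneg (Real.exp_nonneg _)]
      apply Real.exp_le_exp.mpr
      have := abs_le.mp (hfb a); have := abs_le.mp (hf'b a)
      linarith [abs_le.mp (hfb a), abs_le.mp (hf'b a)]
    have hmono : ∫ a, (f' a - f a) ∂π ≤ ∫ a, (Real.exp (f' a - f a) - 1) ∂π := by
      refine integral_mono (hif'.sub hif) (hiexp.sub (integrable_const 1)) ?_
      intro a
      have := Real.add_one_le_exp (f' a - f a)
      simp only
      linarith
    have h1 : ∫ a, (Real.exp (f' a - f a) - 1) ∂π = 0 := by
      rw [integral_sub hiexp (integrable_const 1), hexp1]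
      simp
    have h2 : ∫ a, (f' a - f a) ∂π = -(∫ a, (f a - f' a) ∂π) := by
      rw [← integral_neg]
      congr 1; ext a; ring
    rw [h2, h1] at hmono
    linarith
  constructor
  · rw [hsub]; ring
  · intro C hC
    set c := ∫ x, f' x ∂μ with hc
    have htv : |∫ a, f' a ∂π - ∫ a, f' a ∂π'|
        ≤ C * ((π.toSignedMeasure - π'.toSignedMeasure).totalVariation Set.univ).toReal := by
      have hd : ∫ a, f' a ∂π - ∫ a, f' a ∂π'
          = ∫ a, (f' a - c) ∂π - ∫ a, (f' a - c) ∂π' := by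
        have hπc : Integrable f' π := hif'
        have hπ'c : Integrable f' π' := integrable_of_abs_bound _ hf' hf'b
        rw [integral_sub hπc (integrable_const c), integral_sub hπ'c (integrable_const c)]
        simp
      rw [hd]
      exact integral_diff_le_tv π π' (fun a => f' a - c) (hf'.sub measurable_const) C hC
    have heq : ∫ a, f a ∂π - ∫ a, f' a ∂π'
        = ∫ a, (f a - f' a) ∂π + (∫ a, f' a ∂π - ∫ a, f' a ∂π') := by
      rw [hsub]; ring
    rw [heq]
    have h1 := abs_le.mp htv
    rw [abs_le]
    constructor <;> [skip; skip] <;> nlinarith [hKL, h1.1, h1.2]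
end

section
/- (Pinsker combined bound) Let $\mu, \pi, \pi'$ be probability measures on $A$ with $\pi, \pi' \ll \mu$ and bounded log-densities, and let $L = \| \log\frac{d\pi'}{d\mu} - \int \log\frac{d\pi'}{d\mu} d\mu \|_\infty$. Then $|\operatorname{KL}(\pi|\mu) - \operatorname{KL}(\pi'|\mu)| \le \operatorname{KL}(\pi|\pi') + \sqrt{2} L\, \operatorname{KL}(\pi|\pi')^{1/2}$. -/
open MeasureTheory


lemma my_log_ge (x : ℝ) (hx : 0 < x) : 1 - 1/x ≤ Real.log x := by
  have h := Real.log_le_sub_one_of_pos (show (0:ℝ) < 1/x by positivity)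
  rw [one_div, Real.log_inv] at h
  have : (x:ℝ)⁻¹ = 1/x := (one_div x).symm
  linarith [h, this ▸ h]

lemma my_g_deriv (x : ℝ) (hx : 0 < x) :
    HasDerivAt (fun y => (y+1)*Real.log y - 2*(y-1)) (Real.log x + (x+1)*x⁻¹ - 2) x := by
  have h1 : HasDerivAt (fun y:ℝ => y+1) 1 x := (hasDerivAt_id x).add_const 1
  have h2 : HasDerivAt Real.log x⁻¹ x := Real.hasDerivAt_log hx.ne'
  have h3 := h1.mul h2
  have h4 : HasDerivAt (fun y:ℝ => 2*(y-1)) 2 x := by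
    simpa using ((hasDerivAt_id x).sub_const 1).const_mul 2
  exact (h3.sub h4).congr_deriv (by ring)

lemma my_g_mono : MonotoneOn (fun y => (y+1)*Real.log y - 2*(y-1)) (Set.Ioi (0:ℝ)) := by
  apply monotoneOn_of_deriv_nonneg (convex_Ioi 0)
  · intro x hx
    exact ((my_g_deriv x hx).differentiableAt).continuousAt.continuousWithinAt
  · rw [interior_Ioi]
    intro x hx
    exact (my_g_deriv x hx).differentiableAt.differentiableWithinAt
  · rw [interior_Ioi]
    intro x hx
    rw [(my_g_deriv x hx).deriv]
    have h1 := my_log_ge x hx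
    have hx0 : (x:ℝ) ≠ 0 := ne_of_gt hx
    have h2 : (x+1)*x⁻¹ = 1 + 1/x := by field_simp
    rw [h2]; linarith

lemma my_h_deriv (x : ℝ) (hx : 0 < x) :
    HasDerivAt (fun y => (2*y+4)*(y*Real.log y - y + 1) - 3*(y-1)^2)
      (4*((x+1)*Real.log x - 2*(x-1))) x := by
  have h1 : HasDerivAt (fun y:ℝ => 2*y+4) 2 x := by
    simpa using ((hasDerivAt_id x).const_mul 2).add_const 4
  have hlog : HasDerivAt Real.log x⁻¹ x := Real.hasDerivAt_log hx.ne'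
  have h2 : HasDerivAt (fun y:ℝ => y*Real.log y - y + 1) (Real.log x) x := by
    have hm := ((hasDerivAt_id x).mul hlog).sub (hasDerivAt_id x)
    have h' := hm.add_const 1
    refine h'.congr_deriv ?_
    have hxx : x*x⁻¹ = 1 := mul_inv_cancel₀ hx.ne'
    simp [hxx]
  have h3 := h1.mul h2
  have h4 : HasDerivAt (fun y:ℝ => 3*(y-1)^2) (3*(2*(x-1))) x := by
    have := (((hasDerivAt_id x).sub_const 1).pow 2).const_mul 3
    simpa using this
  have h5 := h3.sub h4
  refine h5.congr_deriv ?_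
  ring

lemma my_pointwise_pinsker (x : ℝ) (hx : 0 < x) :
    3*(x-1)^2 ≤ (2*x+4)*(x*Real.log x - x + 1) := by
  have gmono : MonotoneOn (fun y => (y+1)*Real.log y - 2*(y-1)) (Set.Ioi (0:ℝ)) := my_g_mono
  set h : ℝ → ℝ := fun y => (2*y+4)*(y*Real.log y - y + 1) - 3*(y-1)^2 with hdef
  have key : 0 ≤ h x := by
    have h1 : h 1 = 0 := by simp [hdef]
    rcases le_or_gt 1 x with hx1 | hx1
    · have hm : MonotoneOn h (Set.Ici (1:ℝ)) := by
        apply monotoneOn_of_deriv_nonneg (convex_Ici 1)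
        · intro y hy
          have hy0 : (0:ℝ) < y := lt_of_lt_of_le one_pos hy
          exact ((my_h_deriv y hy0).differentiableAt).continuousAt.continuousWithinAt
        · rw [interior_Ici]
          intro y hy
          exact (my_h_deriv y (lt_trans one_pos hy)).differentiableAt.differentiableWithinAt
        · rw [interior_Ici]
          intro y hy
          have hy0 : (0:ℝ) < y := lt_trans one_pos hy
          rw [(my_h_deriv y hy0).deriv]
          have hg := gmono (Set.mem_Ioi.mpr one_pos) (Set.mem_Ioi.mpr hy0) (le_of_lt hy)
          simp only [Real.log_one] at hg
          nlinarith [hg]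
      have := hm (Set.self_mem_Ici) hx1 hx1
      linarith [h1 ▸ this]
    · have hm : AntitoneOn h (Set.Ioc (0:ℝ) 1) := by
        apply antitoneOn_of_deriv_nonpos (convex_Ioc 0 1)
        · intro y hy
          exact ((my_h_deriv y hy.1).differentiableAt).continuousAt.continuousWithinAt
        · rw [interior_Ioc]
          intro y hy
          exact (my_h_deriv y hy.1).differentiableAt.differentiableWithinAt
        · rw [interior_Ioc]
          intro y hy
          rw [(my_h_deriv y hy.1).deriv]
          have hg := gmono (Set.mem_Ioi.mpr hy.1) (Set.mem_Ioi.mpr one_pos) (le_of_lt hy.2)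
          simp only [Real.log_one] at hg
          nlinarith [hg]
      have hmem : x ∈ Set.Ioc (0:ℝ) 1 := ⟨hx, le_of_lt hx1⟩
      have := hm hmem (Set.right_mem_Ioc.mpr one_pos) (le_of_lt hx1)
      linarith [h1 ▸ this]
  simp only [hdef] at key
  linarith

lemma my_kl_nonneg (p q u : ℝ) (hp : 0 < p) (hq : 0 < q) (hu : Real.log (p/q) = u) :
    0 ≤ p*u - p + q := by
  have h := Real.log_le_sub_one_of_pos (show (0:ℝ) < q/p by positivity)
  have hlog : Real.log (q/p) = -u := by
    rw [← hu, Real.log_div hq.ne' hp.ne', Real.log_div hp.ne' hq.ne']; ring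
  rw [hlog] at h
  have h2 : p * (-u) ≤ p * (q/p - 1) := mul_le_mul_of_nonneg_left h hp.le
  have h3 : p * (q/p - 1) = q - p := by field_simp
  linarith [h3 ▸ h2]

lemma my_pinsker_scaled (p q u : ℝ) (hp : 0 < p) (hq : 0 < q) (hu : Real.log (p/q) = u) :
    3*(p-q)^2 ≤ (2*p+4*q)*(p*u - p + q) := by
  have h0 := my_pointwise_pinsker (p/q) (div_pos hp hq)
  rw [hu] at h0
  have hq0 : (q:ℝ) ≠ 0 := hq.ne'
  have hxq : (p/q)*q = p := div_mul_cancel₀ p hq0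
  have hm := mul_le_mul_of_nonneg_right h0 (sq_nonneg q)
  have e1 : 3*(p/q-1)^2 * q^2 = 3*(p-q)^2 := by field_simp
  have e2 : (2*(p/q)+4)*((p/q)*u - p/q + 1) * q^2 = (2*p+4*q)*(p*u - p + q) := by
    linear_combination (2*u*((p/q)*q + p) - 2*((p/q)*q + p) - 2*q + 4*u*q) * hxq
  rw [e1, e2] at hm
  exact hm


lemma my_amgm_step (u v d t : ℝ) (ht : 0 < t) (hv : 0 < v) (hd : 0 ≤ d)
    (h : u^2 ≤ v*d) : |u| ≤ t*v/2 + d/(2*t) := by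
  have h2 : 2*t*|u| ≤ t^2*v + d := by
    nlinarith [sq_nonneg (t*v - |u|), sq_abs u, sq_nonneg t]
  have h2t : (0:ℝ) < 2*t := by linarith
  calc |u| = (2*t*|u|)/(2*t) := by field_simp
    _ ≤ (t^2*v+d)/(2*t) := by apply div_le_div_of_nonneg_right h2 h2t.le
    _ = t*v/2 + d/(2*t) := by field_simp

lemma my_sup_bound (S K : ℝ) (hK : 0 ≤ K) (h : ∀ t, 0 < t → S ≤ t + K/(2*t)) :
    S ≤ Real.sqrt 2 * Real.sqrt K := by
  rcases eq_or_lt_of_le hK with h0 | h0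
  · have hS : S ≤ 0 := by
      by_contra hS
      push_neg at hS
      have h1 := h (S/2) (by linarith)
      rw [← h0] at h1
      simp only [zero_div] at h1
      linarith
    have : Real.sqrt 2 * Real.sqrt K = 0 := by rw [← h0]; simp
    linarith
  · set t := Real.sqrt (K/2) with htdef
    have ht : 0 < t := Real.sqrt_pos.mpr (by linarith)
    have ht2 : t^2 = K/2 := Real.sq_sqrt (by linarith)
    have h1 := h t ht
    have hK2t : K/(2*t) = t := by
      rw [eq_comm, eq_div_iff (by positivity)]
      nlinarith [ht2]
    rw [hK2t] at h1
    have h2t : 2*t = Real.sqrt 2 * Real.sqrt K := by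
      rw [← Real.sqrt_mul (by norm_num : (0:ℝ) ≤ 2) K]
      rw [show (2:ℝ)*K = (2*t)^2 by nlinarith [ht2]]
      rw [Real.sqrt_sq (by linarith)]
    rw [← h2t]; linarith

lemma my_integrable_of_bound {A : Type*} [MeasurableSpace A] {μ : Measure A} [IsFiniteMeasure μ]
    {g : A → ℝ} (hg : Measurable g) (C : ℝ) (hC : ∀ a, |g a| ≤ C) : Integrable g μ :=
  (integrable_const C).mono' hg.aestronglyMeasurable
    (Filter.Eventually.of_forall (fun a => by simpa [Real.norm_eq_abs] using hC a))

lemma my_integral_withDensity_exp {A : Type*} [MeasurableSpace A] (μ : Measure A)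
    (f : A → ℝ) (hf : Measurable f) (g : A → ℝ) :
    ∫ a, g a ∂(μ.withDensity (fun a => ENNReal.ofReal (Real.exp (f a))))
      = ∫ a, Real.exp (f a) * g a ∂μ := by
  have h1 : (fun a => ENNReal.ofReal (Real.exp (f a)))
      = fun a => ((Real.toNNReal (Real.exp (f a)) : NNReal) : ENNReal) := rfl
  rw [h1, integral_withDensity_eq_integral_smul (hf.exp.real_toNNReal)]
  congr 1
  ext a
  simp [NNReal.smul_def, Real.coe_toNNReal _ (Real.exp_pos _).le]

/-- Pinsker combined bound: with `f = log dπ/dμ`, `f' = log dπ'/dμ`,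
`KL(π|π') = ∫ (f - f') dπ` and `L` any bound on the centered log-density of `π'`,
`|KL(π|μ) - KL(π'|μ)| ≤ KL(π|π') + √2 · L · KL(π|π')^{1/2}`. -/
theorem stmt_17 {A : Type*} [MeasurableSpace A]
    (μ π π' : Measure A) [IsProbabilityMeasure μ]
    [IsProbabilityMeasure π] [IsProbabilityMeasure π']
    (f f' : A → ℝ) (hf : Measurable f) (hf' : Measurable f')
    (M : ℝ) (hfb : ∀ a, |f a| ≤ M) (hf'b : ∀ a, |f' a| ≤ M)
    (hπ : π = μ.withDensity (fun a => ENNReal.ofReal (Real.exp (f a))))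
    (hπ' : π' = μ.withDensity (fun a => ENNReal.ofReal (Real.exp (f' a))))
    (L : ℝ) (hL : ∀ a, |f' a - ∫ x, f' x ∂μ| ≤ L) :
    |∫ a, f a ∂π - ∫ a, f' a ∂π'|
      ≤ (∫ a, (f a - f' a) ∂π)
        + Real.sqrt 2 * L * Real.sqrt (∫ a, (f a - f' a) ∂π) := by
  -- nonemptiness
  have hA : Nonempty A := by
    by_contra hA
    have hIE : IsEmpty A := not_nonempty_iff.mp hA
    have h1 : μ Set.univ = 1 := measure_univ
    rw [Set.univ_eq_empty_iff.mpr hIE, measure_empty] at h1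
    exact zero_ne_one h1
  have hL0 : 0 ≤ L := le_trans (abs_nonneg _) (hL (Classical.arbitrary A))
  set c : ℝ := ∫ x, f' x ∂μ with hc
  -- bounds
  have hPle : ∀ a, Real.exp (f a) ≤ Real.exp M :=
    fun a => Real.exp_le_exp.mpr (abs_le.mp (hfb a)).2
  have hQle : ∀ a, Real.exp (f' a) ≤ Real.exp M :=
    fun a => Real.exp_le_exp.mpr (abs_le.mp (hf'b a)).2
  have hff' : ∀ a, |f a - f' a| ≤ 2*M := by
    intro a
    have h1 := abs_le.mp (hfb a); have h2 := abs_le.mp (hf'b a)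
    rw [abs_le]; constructor <;> linarith
  have hPQ : ∀ a, |Real.exp (f a) - Real.exp (f' a)| ≤ 2*Real.exp M := by
    intro a
    have := Real.exp_pos (f a); have := Real.exp_pos (f' a)
    rw [abs_le]; constructor <;> [linarith [hQle a]; linarith [hPle a]]
  -- integrability
  have iP : Integrable (fun a => Real.exp (f a)) μ :=
    my_integrable_of_bound hf.exp (Real.exp M)
      (fun a => by rw [abs_of_pos (Real.exp_pos _)]; exact hPle a)
  have iQ : Integrable (fun a => Real.exp (f' a)) μ :=
    my_integrable_of_bound hf'.exp (Real.exp M)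
      (fun a => by rw [abs_of_pos (Real.exp_pos _)]; exact hQle a)
  have iPf : Integrable (fun a => Real.exp (f a) * f a) μ :=
    my_integrable_of_bound (hf.exp.mul hf) (Real.exp M * M)
      (fun a => by
        rw [abs_mul, abs_of_pos (Real.exp_pos _)]
        exact mul_le_mul (hPle a) (hfb a) (abs_nonneg _) (Real.exp_pos M).le)
  have iQf' : Integrable (fun a => Real.exp (f' a) * f' a) μ :=
    my_integrable_of_bound (hf'.exp.mul hf') (Real.exp M * M)
      (fun a => by
        rw [abs_mul, abs_of_pos (Real.exp_pos _)]
        exact mul_le_mul (hQle a) (hf'b a) (abs_nonneg _) (Real.exp_pos M).le)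
  have iK : Integrable (fun a => Real.exp (f a) * (f a - f' a)) μ :=
    my_integrable_of_bound (hf.exp.mul (hf.sub hf')) (Real.exp M * (2*M))
      (fun a => by
        rw [abs_mul, abs_of_pos (Real.exp_pos _)]
        exact mul_le_mul (hPle a) (hff' a) (abs_nonneg _) (Real.exp_pos M).le)
  have iR : Integrable (fun a => (f' a - c) * (Real.exp (f a) - Real.exp (f' a))) μ :=
    my_integrable_of_bound ((hf'.sub measurable_const).mul (hf.exp.sub hf'.exp))
      (L * (2*Real.exp M))
      (fun a => by
        rw [abs_mul]
        exact mul_le_mul (hL a) (hPQ a) (abs_nonneg _) hL0)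
  have iRabs : Integrable (fun a => |(f' a - c) * (Real.exp (f a) - Real.exp (f' a))|) μ :=
    iR.abs
  have iS : Integrable (fun a => |Real.exp (f a) - Real.exp (f' a)|) μ :=
    (iP.sub iQ).abs
  have iKP : Integrable (fun a => Real.exp (f a) * (f a - f' a) - Real.exp (f a)) μ :=
    iK.sub iP
  have iD : Integrable
      (fun a => Real.exp (f a) * (f a - f' a) - Real.exp (f a) + Real.exp (f' a)) μ :=
    iKP.add iQ
  -- integral conversions
  have hfπ : ∫ a, f a ∂π = ∫ a, Real.exp (f a) * f a ∂μ := by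
    rw [hπ]; exact my_integral_withDensity_exp μ f hf f
  have hf'π' : ∫ a, f' a ∂π' = ∫ a, Real.exp (f' a) * f' a ∂μ := by
    rw [hπ']; exact my_integral_withDensity_exp μ f' hf' f'
  have hKπ : ∫ a, (f a - f' a) ∂π = ∫ a, Real.exp (f a) * (f a - f' a) ∂μ := by
    rw [hπ]; exact my_integral_withDensity_exp μ f hf (fun a => f a - f' a)
  have hP1 : ∫ a, Real.exp (f a) ∂μ = 1 := by
    have h1 : ∫ a, (1:ℝ) ∂π = ∫ a, Real.exp (f a) * 1 ∂μ := by
      rw [hπ]; exact my_integral_withDensity_exp μ f hf 1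
    simp only [mul_one] at h1
    rw [← h1]; simp
  have hQ1 : ∫ a, Real.exp (f' a) ∂μ = 1 := by
    have h1 : ∫ a, (1:ℝ) ∂π' = ∫ a, Real.exp (f' a) * 1 ∂μ := by
      rw [hπ']; exact my_integral_withDensity_exp μ f' hf' 1
    simp only [mul_one] at h1
    rw [← h1]; simp
  set K : ℝ := ∫ a, Real.exp (f a) * (f a - f' a) ∂μ with hKdef
  set R : ℝ := ∫ a, (f' a - c) * (Real.exp (f a) - Real.exp (f' a)) ∂μ with hRdef
  set Sv : ℝ := ∫ a, |Real.exp (f a) - Real.exp (f' a)| ∂μ with hSdef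
  -- pointwise log identity
  have hu : ∀ a, Real.log (Real.exp (f a) / Real.exp (f' a)) = f a - f' a := by
    intro a
    rw [Real.log_div (Real.exp_pos _).ne' (Real.exp_pos _).ne', Real.log_exp, Real.log_exp]
  have hD : ∀ a, 0 ≤ Real.exp (f a) * (f a - f' a) - Real.exp (f a) + Real.exp (f' a) :=
    fun a => my_kl_nonneg _ _ _ (Real.exp_pos _) (Real.exp_pos _) (hu a)
  have hDK : ∫ a, (Real.exp (f a) * (f a - f' a) - Real.exp (f a) + Real.exp (f' a)) ∂μ
      = K := by
    rw [integral_add iKP iQ, integral_sub iK iP, hP1, hQ1, ← hKdef]; ring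
  have hK0 : 0 ≤ K := by
    rw [← hDK]; exact integral_nonneg hD
  -- Pinsker via sup bound
  have hSle : ∀ t, 0 < t → Sv ≤ t + K/(2*t) := by
    intro t ht
    have hpt : ∀ a, |Real.exp (f a) - Real.exp (f' a)|
        ≤ t*((2*Real.exp (f a) + 4*Real.exp (f' a))/3)/2
          + (Real.exp (f a)*(f a - f' a) - Real.exp (f a) + Real.exp (f' a))/(2*t) := by
      intro a
      apply my_amgm_step _ _ _ _ ht (by positivity) (hD a)
      have h3 := my_pinsker_scaled (Real.exp (f a)) (Real.exp (f' a)) (f a - f' a)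
        (Real.exp_pos _) (Real.exp_pos _) (hu a)
      nlinarith [h3]
    have hform : (fun a => t*((2*Real.exp (f a) + 4*Real.exp (f' a))/3)/2
          + (Real.exp (f a)*(f a - f' a) - Real.exp (f a) + Real.exp (f' a))/(2*t))
        = (fun a => (t/6)*(2*Real.exp (f a) + 4*Real.exp (f' a))
          + (1/(2*t))*(Real.exp (f a)*(f a - f' a) - Real.exp (f a) + Real.exp (f' a))) := by
      funext a; ring
    have iP2 : Integrable (fun a => 2*Real.exp (f a)) μ := iP.const_mul 2
    have iQ4 : Integrable (fun a => 4*Real.exp (f' a)) μ := iQ.const_mul 4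
    have i2 : Integrable (fun a => 2*Real.exp (f a) + 4*Real.exp (f' a)) μ := iP2.add iQ4
    have iRHS : Integrable (fun a => (t/6)*(2*Real.exp (f a) + 4*Real.exp (f' a))
        + (1/(2*t))*(Real.exp (f a)*(f a - f' a) - Real.exp (f a) + Real.exp (f' a))) μ := by
      have i3 : Integrable (fun a => (t/6)*(2*Real.exp (f a) + 4*Real.exp (f' a))) μ :=
        i2.const_mul (t/6)
      have i4 : Integrable (fun a => (1/(2*t))*(Real.exp (f a)*(f a - f' a) - Real.exp (f a) + Real.exp (f' a))) μ :=
        iD.const_mul (1/(2*t))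
      exact i3.add i4
    have hmono := integral_mono iS (hform ▸ iRHS) hpt
    rw [hform] at hmono
    have hRHS : ∫ a, ((t/6)*(2*Real.exp (f a) + 4*Real.exp (f' a))
        + (1/(2*t))*(Real.exp (f a)*(f a - f' a) - Real.exp (f a) + Real.exp (f' a))) ∂μ
        = t + K/(2*t) := by
      have i3 : Integrable (fun a => (t/6)*(2*Real.exp (f a) + 4*Real.exp (f' a))) μ :=
        i2.const_mul (t/6)
      have i4 : Integrable (fun a => (1/(2*t))*(Real.exp (f a)*(f a - f' a) - Real.exp (f a) + Real.exp (f' a))) μ :=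
        iD.const_mul (1/(2*t))
      rw [integral_add i3 i4, integral_const_mul, integral_const_mul, hDK,
        integral_add iP2 iQ4, integral_const_mul, integral_const_mul, hP1, hQ1]
      field_simp
      ring
    rw [hRHS] at hmono
    exact hmono
  have hPinsker : Sv ≤ Real.sqrt 2 * Real.sqrt K := my_sup_bound Sv K hK0 hSle
  -- decomposition
  have hdec : K + R = (∫ a, Real.exp (f a) * f a ∂μ) - ∫ a, Real.exp (f' a) * f' a ∂μ := by
    have h1 : (fun a => Real.exp (f a)*(f a - f' a)
          + (f' a - c)*(Real.exp (f a) - Real.exp (f' a)))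
        = fun a => (Real.exp (f a)*f a - Real.exp (f' a)*f' a - c*Real.exp (f a))
          + c*Real.exp (f' a) := by
      funext a; ring
    have iPQ : Integrable (fun a => Real.exp (f a)*f a - Real.exp (f' a)*f' a) μ :=
      iPf.sub iQf'
    have icP : Integrable (fun a => c*Real.exp (f a)) μ := iP.const_mul c
    have icQ : Integrable (fun a => c*Real.exp (f' a)) μ := iQ.const_mul c
    have iPQc : Integrable (fun a => Real.exp (f a)*f a - Real.exp (f' a)*f' a - c*Real.exp (f a)) μ :=
      iPQ.sub icP
    rw [hKdef, hRdef, ← integral_add iK iR, h1,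
      integral_add iPQc icQ, integral_sub iPQ icP, integral_sub iPf iQf',
      integral_const_mul, integral_const_mul, hP1, hQ1]
    ring
  -- bound |R|
  have hRabs : |R| ≤ L * Sv := by
    have h1 : |R| ≤ ∫ a, |(f' a - c) * (Real.exp (f a) - Real.exp (f' a))| ∂μ := by
      rw [hRdef]
      simpa only [Real.norm_eq_abs] using norm_integral_le_integral_norm
        (fun a => (f' a - c) * (Real.exp (f a) - Real.exp (f' a))) (μ := μ)
    have h2 : ∫ a, |(f' a - c) * (Real.exp (f a) - Real.exp (f' a))| ∂μ
        ≤ ∫ a, L * |Real.exp (f a) - Real.exp (f' a)| ∂μ := by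
      apply integral_mono iRabs (iS.const_mul L)
      intro a
      dsimp only
      rw [abs_mul]
      exact mul_le_mul_of_nonneg_right (hL a) (abs_nonneg _)
    rw [integral_const_mul] at h2
    exact le_trans h1 h2
  -- final assembly
  rw [hfπ, hf'π', hKπ, ← hdec]
  have habs : |K + R| ≤ K + |R| := by
    calc |K + R| ≤ |K| + |R| := abs_add_le K R
      _ = K + |R| := by rw [abs_of_nonneg hK0]
  have hfin : |R| ≤ Real.sqrt 2 * L * Real.sqrt K := by
    calc |R| ≤ L * Sv := hRabs
      _ ≤ L * (Real.sqrt 2 * Real.sqrt K) := mul_le_mul_of_nonneg_left hPinsker hL0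
      _ = Real.sqrt 2 * L * Real.sqrt K := by ring
  linarith
end

section
/- Let $\tau, \lambda > 0$ with $\tau\lambda < 1$, and let $\pi, \pi', \mu$ be probability measures with bounded log-densities relative to each other. Suppose $\int_A f\, d\pi + \frac{1}{\lambda}\operatorname{KL}(\pi|\pi') \le 0$ for some bounded $f$ of the form $f(a) = q(a) + \tau \log\frac{d\pi'}{d\mu}(a)$ with $\|q\|_\infty \le B$. Then $\operatorname{KL}(\pi|\pi') \le \frac{\lambda B}{1-\lambda\tau}$. -/
/-!
Writing `∫ f' dπ = ∫ f dπ - KL(π|π')`, the hypothesis becomes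
`∫ q dπ + τ ∫ f dπ + (1/λ - τ) KL(π|π') ≤ 0`. Here `∫ q dπ ≥ -B`, and `∫ f dπ = KL(π|μ) ≥ 0`
by Gibbs' inequality, so `(1/λ - τ) KL(π|π') ≤ B`.
-/

open MeasureTheory

section

variable {A : Type*} [MeasurableSpace A] {μ : Measure A} {f : A → ℝ}

lemma toReal_ofReal_exp_mul_exp_neg (x : ℝ) :
    (ENNReal.ofReal (Real.exp x)).toReal * Real.exp (-x) = 1 := by
  rw [ENNReal.toReal_ofReal (Real.exp_nonneg x), ← Real.exp_add, add_neg_cancel,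
    Real.exp_zero]

lemma integral_exp_neg_withDensity_exp (hf : Measurable f) :
    ∫ a, Real.exp (-f a) ∂μ.withDensity (fun a => ENNReal.ofReal (Real.exp (f a))) =
      μ.real Set.univ := by
  rw [integral_withDensity_eq_integral_toReal_smul (by fun_prop)
    (.of_forall fun _ => ENNReal.ofReal_lt_top)]
  simp [toReal_ofReal_exp_mul_exp_neg]

lemma integrable_exp_neg_withDensity_exp [IsFiniteMeasure μ] (hf : Measurable f) :
    Integrable (fun a => Real.exp (-f a))
      (μ.withDensity fun a => ENNReal.ofReal (Real.exp (f a))) := by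
  rw [integrable_withDensity_iff_integrable_smul' (by fun_prop)
    (.of_forall fun _ => ENNReal.ofReal_lt_top)]
  simp [toReal_ofReal_exp_mul_exp_neg]

/-- Gibbs' inequality `KL(π|μ) ≥ 0`, from `-f ≤ exp (-f) - 1`. -/
lemma integral_nonneg_of_eq_withDensity_exp [IsProbabilityMeasure μ] {π : Measure A}
    [IsProbabilityMeasure π] (hf : Measurable f)
    (hπ : π = μ.withDensity fun a => ENNReal.ofReal (Real.exp (f a)))
    (hfi : Integrable f π) : 0 ≤ ∫ a, f a ∂π := by
  subst hπ
  have hexp := integrable_exp_neg_withDensity_exp (μ := μ) hf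
  have hle : ∫ a, -f a ∂_ ≤ ∫ a, (Real.exp (-f a) - 1) ∂_ :=
    integral_mono hfi.neg (hexp.sub (integrable_const 1)) fun a => by
      linarith [Real.add_one_le_exp (-f a)]
  rw [integral_neg, integral_sub hexp (integrable_const 1), integral_exp_neg_withDensity_exp hf]
    at hle
  simpa using hle

end

theorem stmt_18_general {A : Type*} [MeasurableSpace A]
    (μ π : Measure A) [IsProbabilityMeasure μ]
    [IsProbabilityMeasure π]
    (τ lam : ℝ) (hτ : 0 < τ) (hlam : 0 < lam) (hτlam : τ * lam < 1)
    (f f' : A → ℝ) (hf : Measurable f) (hf' : Measurable f')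
    (M : ℝ) (hfb : ∀ a, |f a| ≤ M) (hf'b : ∀ a, |f' a| ≤ M)
    (hπ : π = μ.withDensity (fun a => ENNReal.ofReal (Real.exp (f a))))
    (q : A → ℝ) (hq : Measurable q) (B : ℝ) (hB : ∀ a, |q a| ≤ B)
    (hyp : ∫ a, (q a + τ * f' a) ∂π + (1 / lam) * ∫ a, (f a - f' a) ∂π ≤ 0) :
    ∫ a, (f a - f' a) ∂π ≤ lam * B / (1 - lam * τ) := by
  have integrable_of_abs_le {g : A → ℝ} (hg : Measurable g) {C : ℝ} (hC : ∀ a, |g a| ≤ C) :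
      Integrable g π :=
    .of_bound hg.aestronglyMeasurable C (.of_forall hC)
  have hfi := integrable_of_abs_le hf hfb
  have hf'i := integrable_of_abs_le hf' hf'b
  have hqi := integrable_of_abs_le hq hB
  have hKLμ : 0 ≤ ∫ a, f a ∂π := integral_nonneg_of_eq_withDensity_exp hf hπ hfi
  have hqB : -B ≤ ∫ a, q a ∂π := by
    simpa using integral_mono (integrable_const (-B)) hqi fun a => (abs_le.mp (hB a)).1
  rw [integral_add hqi (hf'i.const_mul τ), integral_const_mul] at hyp
  rw [integral_sub hfi hf'i] at hyp ⊢
  have hyp_mul_lam : lam * ∫ a, q a ∂π + lam * τ * ∫ a, f' a ∂π + (∫ a, f a ∂π - ∫ a, f' a ∂π) ≤ 0 := by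
    have h := mul_nonpos_of_nonneg_of_nonpos hlam.le hyp
    field_simp at h
    linarith
  rw [le_div_iff₀ (sub_pos.2 (mul_comm lam τ ▸ hτlam))]
  linear_combination hyp_mul_lam + mul_nonneg (mul_pos hlam hτ).le hKLμ +
    mul_le_mul_of_nonneg_left hqB hlam.le

/-- `f = log dπ/dμ`, `f' = log dπ'/dμ`, `KL(π|π') = ∫ (f - f') dπ`;
if `∫ (q + τ f') dπ + (1/λ) KL(π|π') ≤ 0` with `‖q‖∞ ≤ B`,
then `KL(π|π') ≤ λ B / (1 - λ τ)`. -/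
theorem stmt_18 {A : Type*} [MeasurableSpace A]
    (μ π π' : Measure A) [IsProbabilityMeasure μ]
    [IsProbabilityMeasure π] [IsProbabilityMeasure π']
    (τ lam : ℝ) (hτ : 0 < τ) (hlam : 0 < lam) (hτlam : τ * lam < 1)
    (f f' : A → ℝ) (hf : Measurable f) (hf' : Measurable f')
    (M : ℝ) (hfb : ∀ a, |f a| ≤ M) (hf'b : ∀ a, |f' a| ≤ M)
    (hπ : π = μ.withDensity (fun a => ENNReal.ofReal (Real.exp (f a))))
    (hπ' : π' = μ.withDensity (fun a => ENNReal.ofReal (Real.exp (f' a))))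
    (q : A → ℝ) (hq : Measurable q) (B : ℝ) (hB : ∀ a, |q a| ≤ B)
    (hyp : ∫ a, (q a + τ * f' a) ∂π + (1 / lam) * ∫ a, (f a - f' a) ∂π ≤ 0) :
    ∫ a, (f a - f' a) ∂π ≤ lam * B / (1 - lam * τ) :=
  stmt_18_general μ π τ lam hτ hlam hτlam f f' hf hf' M hfb hf'b hπ q hq B hB hyp
end
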